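/- Let G be a finite group with identity e and μ a fuzzy subgroup of G. Then the fuzzy order of μ (the least positive integer m such that μ(xᵐ) = μ(e) for all x ∈ G) equals the least common multiple over all x ∈ G of the fuzzy orders FO_μ(x) (where FO_μ(x) is the least positive integer m such that μ(xᵐ) = μ(e)). -/

import Mathlib

/-! The elements on which `μ` attains its maximum `μ e` form a subgroup `H`, and `μ (x ^ m) = μ e`
says that `x ^ m` fixes the coset `H` in `G ⧸ H`. Hence the admissible exponents for `x` are exactly
the multiples of the period of `x` on that coset, and the exponents admissible for every `x` are
the common multiples of these periods, i.e. the multiples of their least common multiple. -/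

/-- A fuzzy subgroup of a group `G`: a function `μ : G → ℝ` valued in `[0,1]`
with `μ (x*y) ≥ min (μ x) (μ y)` and `μ x⁻¹ ≥ μ x`. -/
def IsFuzzySubgroup {G : Type*} [Group G] (μ : G → ℝ) : Prop :=
  (∀ x : G, 0 ≤ μ x ∧ μ x ≤ 1) ∧
  (∀ x y : G, μ (x * y) ≥ min (μ x) (μ y)) ∧
  (∀ x : G, μ x⁻¹ ≥ μ x)

open MulAction

theorem Nat.isLeast_pos_dvd {d : ℕ} (hd : 0 < d) : IsLeast {m : ℕ | 0 < m ∧ d ∣ m} d :=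
  ⟨⟨hd, dvd_rfl⟩, fun _ hm => Nat.le_of_dvd hm.1 hm.2⟩

theorem Subgroup.pow_mem_iff_period_dvd {G : Type*} [Group G] (H : Subgroup G) (x : G) (n : ℕ) :
    x ^ n ∈ H ↔ period x ((1 : G) : G ⧸ H) ∣ n := by
  rw [← pow_smul_eq_iff_period_dvd, Quotient.smul_coe, smul_eq_mul, mul_one, eq_comm,
    QuotientGroup.eq, inv_one, one_mul]

namespace IsFuzzySubgroup

variable {G : Type*} [Group G] {μ : G → ℝ}

theorem le_apply_one (hμ : IsFuzzySubgroup μ) (x : G) : μ x ≤ μ 1 := by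
  simpa [min_eq_left (hμ.2.2 x)] using hμ.2.1 x x⁻¹

/-- The subgroup `μ_* = {x | μ x = μ e}` of the fuzzy-subgroup literature. -/
def topSubgroup (hμ : IsFuzzySubgroup μ) : Subgroup G where
  carrier := {x | μ x = μ 1}
  one_mem' := rfl
  mul_mem' {a b} (ha : μ a = μ 1) (hb : μ b = μ 1) :=
    (hμ.le_apply_one _).antisymm <| by simpa [ha, hb] using hμ.2.1 a b
  inv_mem' {a} (ha : μ a = μ 1) := (hμ.le_apply_one _).antisymm <| ha ▸ hμ.2.2 a

end IsFuzzySubgroup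

theorem stmt_11 {G : Type*} [Group G] [Fintype G] (μ : G → ℝ)
    (hμ : IsFuzzySubgroup μ) :
    ∃ f : G → ℕ,
      (∀ x : G, IsLeast {m : ℕ | 0 < m ∧ μ (x ^ m) = μ 1} (f x)) ∧
      IsLeast {m : ℕ | 0 < m ∧ ∀ x : G, μ (x ^ m) = μ 1}
        (Finset.univ.lcm f) := by
  set f : G → ℕ := fun x => period x ((1 : G) : G ⧸ hμ.topSubgroup)
  have hf_dvd (x : G) (m : ℕ) : μ (x ^ m) = μ 1 ↔ f x ∣ m :=
    hμ.topSubgroup.pow_mem_iff_period_dvd x m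
  have hf_pos (x : G) : 0 < f x := period_pos_of_orderOf_pos (orderOf_pos x) _
  have hlcm_pos : 0 < Finset.univ.lcm f :=
    Nat.pos_of_ne_zero fun h => by
      obtain ⟨x, -, hx⟩ := Finset.lcm_eq_zero_iff.mp h
      exact (hf_pos x).ne' hx
  refine ⟨f, fun x => ?_, ?_⟩
  · simpa only [hf_dvd] using Nat.isLeast_pos_dvd (hf_pos x)
  · simpa only [hf_dvd, Finset.lcm_dvd_iff, Finset.mem_univ, true_implies]
      using Nat.isLeast_pos_dvd hlcm_pos
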